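/- arXiv:1612.07839 — 4 statements merged into one kernel-verified Lean document; each statement's English description precedes it below -/
import Mathlib

section
/- The Kondratiev–Kuna convolution is associative: for functions f, g, h on finite configurations, (f ⋆ g) ⋆ h = f ⋆ (g ⋆ h). -/
/-!
Let `ζ f (ξ) = ∑_{A ⊆ ξ} f A` be the zeta transform over the subset lattice. Pairs `A, B ⊆ ξ`
are partitioned according to `D = A ∪ B ⊆ ξ`, so `ζ (f ⋆ g) = ζ f * ζ g` pointwise, and `ζ` is
injective by Möbius inversion (strong induction on `ξ`). Hence both bracketings of `f ⋆ g ⋆ h`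
have zeta transform `ζ f * ζ g * ζ h`, and they agree.
-/

open Finset

/-- Kondratiev–Kuna convolution of functions on finite configurations. -/
noncomputable def kkConv {X : Type*} [DecidableEq X] (f g : Finset X → ℂ) (ξ : Finset X) : ℂ :=
  ∑ A ∈ ξ.powerset, ∑ B ∈ ξ.powerset, if A ∪ B = ξ then f A * g B else 0

namespace Finset

variable {X M : Type*}

def zetaTransform [AddCommMonoid M] (f : Finset X → M) (ξ : Finset X) : M :=
  ∑ A ∈ ξ.powerset, f A

theorem zetaTransform_injective [DecidableEq X] [AddCancelCommMonoid M] :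
    Function.Injective (zetaTransform : (Finset X → M) → Finset X → M) := by
  intro f g hfg
  funext ξ
  induction ξ using Finset.strongInduction with
  | H ξ ih =>
    have hξ := congrFun hfg ξ
    simp only [zetaTransform, ← add_sum_erase _ _ (mem_powerset_self ξ)] at hξ
    rw [sum_congr (s₁ := ξ.powerset.erase ξ) rfl fun A hA => ih A (mem_ssubsets.1 hA)] at hξ
    exact add_right_cancel hξ

end Finset

section

variable {X : Type*} [DecidableEq X]

theorem kkConv_eq_sum_powerset_of_subset (f g : Finset X → ℂ) {D ξ : Finset X} (hD : D ⊆ ξ) :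
    kkConv f g D = ∑ A ∈ ξ.powerset, ∑ B ∈ ξ.powerset,
      if A ∪ B = D then f A * g B else 0 := by
  unfold kkConv
  rw [sum_subset (powerset_mono.2 hD)]
  · refine sum_congr rfl fun A _ => sum_subset (powerset_mono.2 hD) fun B _ hB => if_neg ?_
    exact fun hAB => mem_powerset.not.1 hB (hAB ▸ subset_union_right)
  · intro A _ hA
    refine sum_eq_zero fun B _ => if_neg fun hAB => ?_
    exact mem_powerset.not.1 hA (hAB ▸ subset_union_left)

theorem zetaTransform_kkConv (f g : Finset X → ℂ) (ξ : Finset X) :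
    zetaTransform (kkConv f g) ξ = zetaTransform f ξ * zetaTransform g ξ := by
  set s := ξ.powerset
  calc ∑ D ∈ s, kkConv f g D
      = ∑ D ∈ s, ∑ A ∈ s, ∑ B ∈ s, if A ∪ B = D then f A * g B else 0 :=
        sum_congr rfl fun D hD => kkConv_eq_sum_powerset_of_subset f g (mem_powerset.1 hD)
    _ = ∑ A ∈ s, ∑ B ∈ s, ∑ D ∈ s, if A ∪ B = D then f A * g B else 0 := by
        rw [sum_comm]
        exact sum_congr rfl fun _ _ => sum_comm
    _ = ∑ A ∈ s, ∑ B ∈ s, f A * g B := by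
        refine sum_congr rfl fun A hA => sum_congr rfl fun B hB => ?_
        rw [sum_ite_eq, if_pos]
        exact mem_powerset.2 (union_subset (mem_powerset.1 hA) (mem_powerset.1 hB))
    _ = (∑ A ∈ s, f A) * ∑ B ∈ s, g B := (sum_mul_sum _ _ _ _).symm

end

theorem kkConv_assoc {X : Type*} [DecidableEq X] (f g h : Finset X → ℂ) :
    kkConv (kkConv f g) h = kkConv f (kkConv g h) := by
  apply zetaTransform_injective
  funext ξ
  simp only [zetaTransform_kkConv, mul_assoc]
end

section
/- For characters χ_φ and χ_ψ associated to functions φ, ψ : X → ℂ, the convolution identity χ_φ ⋆ χ_ψ = χ_{φ + ψ + φψ} holds, where (φ + ψ + φψ)(x) = φ(x) + ψ(x) + φ(x)ψ(x). -/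
open Finset

/-- The character associated to a function `φ : X → ℂ`. -/
noncomputable def kkChar {X : Type*} (φ : X → ℂ) (ξ : Finset X) : ℂ :=
  ∏ x ∈ ξ, φ x

/-!
For `A ⊆ ξ`, the sets `B ⊆ ξ` with `A ∪ B = ξ` are exactly `(ξ \ A) ∪ C` with `C ⊆ A`. For
characters the sum over `C` factors as `χ_ψ(ξ \ A) · ∏_{x ∈ A} (1 + ψ x)`, so
`(χ_φ ⋆ χ_ψ)(ξ) = ∑_{A ⊆ ξ} ∏_{x ∈ A} φ x (1 + ψ x) · ∏_{x ∈ ξ \ A} ψ x`,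
which is the expansion of `∏_{x ∈ ξ} (φ x (1 + ψ x) + ψ x)`.
-/

theorem sum_powerset_ite_union_eq {X M : Type*} [DecidableEq X] [AddCommMonoid M]
    {A ξ : Finset X} (hA : A ⊆ ξ) (g : Finset X → M) :
    ∑ B ∈ ξ.powerset, (if A ∪ B = ξ then g B else 0) = ∑ C ∈ A.powerset, g (ξ \ A ∪ C) := by
  rw [← sum_filter]
  have sdiff_union_inter {B : Finset X} (hB : A ∪ B = ξ) : ξ \ A ∪ B ∩ A = B := by grind
  refine sum_nbij' (fun B => B ∩ A) (fun C => ξ \ A ∪ C) ?_ ?_ ?_ ?_ ?_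
  · intro B _
    simpa only [mem_coe, mem_powerset] using inter_subset_right
  · intro C hC
    simp only [mem_filter, mem_powerset] at hC ⊢
    grind
  · intro B hB
    simp only [mem_filter, mem_powerset] at hB
    exact sdiff_union_inter hB.2
  · intro C hC
    simp only [mem_powerset] at hC
    grind
  · intro B hB
    simp only [mem_filter, mem_powerset] at hB
    rw [sdiff_union_inter hB.2]

theorem kkConv_apply_eq_sum_powerset_sdiff_union {X : Type*} [DecidableEq X]
    (f g : Finset X → ℂ) (ξ : Finset X) :
    kkConv f g ξ = ∑ A ∈ ξ.powerset, f A * ∑ C ∈ A.powerset, g (ξ \ A ∪ C) := by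
  unfold kkConv
  refine sum_congr rfl fun A hA => ?_
  rw [← sum_powerset_ite_union_eq (mem_powerset.mp hA), mul_sum]
  exact sum_congr rfl fun B _ => by split_ifs <;> simp

theorem kkChar_union_of_disjoint {X : Type*} [DecidableEq X] (φ : X → ℂ) {s t : Finset X}
    (h : Disjoint s t) : kkChar φ (s ∪ t) = kkChar φ s * kkChar φ t :=
  prod_union h

theorem sum_powerset_kkChar {X : Type*} (φ : X → ℂ) (s : Finset X) :
    ∑ t ∈ s.powerset, kkChar φ t = kkChar (fun x => 1 + φ x) s :=
  (prod_one_add s).symm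

theorem kkConv_char {X : Type*} [DecidableEq X] (φ ψ : X → ℂ) :
    kkConv (kkChar φ) (kkChar ψ) = kkChar (fun x => φ x + ψ x + φ x * ψ x) := by
  funext ξ
  calc kkConv (kkChar φ) (kkChar ψ) ξ
      = ∑ A ∈ ξ.powerset, kkChar φ A * ∑ C ∈ A.powerset, kkChar ψ (ξ \ A) * kkChar ψ C := by
        rw [kkConv_apply_eq_sum_powerset_sdiff_union]
        refine sum_congr rfl fun A _ => congrArg _ (sum_congr rfl fun C hC => ?_)
        exact kkChar_union_of_disjoint ψ
          (disjoint_sdiff_self_left.mono_right (mem_powerset.mp hC))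
    _ = ∑ A ∈ ξ.powerset, kkChar (fun x => φ x * (1 + ψ x)) A * kkChar ψ (ξ \ A) := by
        refine sum_congr rfl fun A _ => ?_
        rw [← mul_sum, sum_powerset_kkChar]
        simp only [kkChar, prod_mul_distrib]
        ring
    _ = kkChar (fun x => φ x + ψ x + φ x * ψ x) ξ := by
        simp only [kkChar]
        rw [← prod_add]
        exact prod_congr rfl fun x _ => by ring
end

section
/- Exponential integral formula for the Lebesgue–Poisson measure: for a bounded measurable function f : X → ℂ supported on a set of finite σ-measure, Σ_{n=0}^∞ (1/n!) ∫_{X^n} Π_{j=1}^n e^{f(x_j)} dσ^{⊗n}(x₁,…,x_n) = exp(∫_X e^{f(x)} dσ(x)), provided ∫_X |e^{f(x)}| dσ(x) < ∞. -/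
open MeasureTheory

theorem lebesguePoisson_exp_integral {X : Type*} [MeasurableSpace X] (σ : Measure X)
    [SigmaFinite σ] (f : X → ℂ)
    (hf : Integrable (fun x => Complex.exp (f x)) σ) :
    ∑' n : ℕ, (1 / n.factorial : ℂ) *
        ∫ x : Fin n → X, ∏ j, Complex.exp (f (x j)) ∂(Measure.pi fun _ : Fin n => σ)
      = Complex.exp (∫ x, Complex.exp (f x) ∂σ) := by
  letI : MeasureSpace X := ⟨σ⟩
  have hvol : ∀ n : ℕ, (Measure.pi fun _ : Fin n => σ) = (volume : Measure (Fin n → X)) := by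
    intro n; rfl
  have key : ∀ n : ℕ,
      ∫ x : Fin n → X, ∏ j, Complex.exp (f (x j)) ∂(Measure.pi fun _ : Fin n => σ)
        = (∫ x, Complex.exp (f x) ∂σ) ^ n := by
    intro n
    rw [hvol n]
    simpa [← hvol n] using MeasureTheory.integral_fintype_prod_eq_pow (ι := Fin n)
      (fun x => Complex.exp (f x)) (μ := σ)
  simp_rw [key]
  rw [Complex.exp_eq_exp_ℂ, NormedSpace.exp_eq_tsum_div]
  congr 1
  ext n
  ring
end

section
/- The Lebesgue–Poisson measure factorizes over disjoint sets: for disjoint measurable sets A, B with finite σ-measure, the map (ξ, η) ↦ ξ ∪ η pushes λ_A ⊗ λ_B forward to λ_{A∪B} on finite configurations of A ∪ B. -/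
open MeasureTheory
open scoped ENNReal

/-- The Lebesgue–Poisson measure built from the intensity measure `σ` restricted to `Y`,
realized on the space of finite point measures: it is `Σ_{n≥0} (1/n!) (σ|_Y)^{⊗n}`,
pushed forward under the map sending an ordered tuple to the corresponding sum of
Dirac measures (a finite configuration). -/
noncomputable def lebesguePoisson {X : Type*} [MeasurableSpace X] (σ : Measure X) (Y : Set X) :
    Measure (Measure X) :=
  Measure.sum fun n : ℕ =>
    ((n.factorial : ℝ≥0∞))⁻¹ •
      Measure.map (fun x : Fin n → X => ∑ i, Measure.dirac (x i))
        (Measure.pi fun _ : Fin n => σ.restrict Y)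

/-!
Write `Cₙ(μ)` for the image of `μ^{⊗n}` under `(xᵢ)ᵢ ↦ ∑ᵢ δ_{xᵢ}`. The Lebesgue–Poisson measure
of `μ` is the exponential `∑ₙ Cₙ(μ) / n!` for the convolution `∗` of measures on the additive
monoid of point measures, and `σ|_{A ∪ B} = σ|_A + σ|_B`, so it suffices to show
`exp (μ + ν) = exp μ ∗ exp ν`. Expanding `(μ + ν)^{⊗n} = ∑_{S ⊆ [n]} μ^{⊗S} ⊗ ν^{⊗Sᶜ}` and
splitting the configuration of a tuple into those of its `S`- and `Sᶜ`-coordinates gives the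
binomial formula `Cₙ(μ + ν) = ∑_{i + j = n} (n choose i) Cᵢ(μ) ∗ Cⱼ(ν)`; then
`(n choose i) / n! = 1 / (i! j!)` turns the sum over `n` into the Cauchy product.
-/

open Finset
open scoped Nat

lemma ENNReal.add_choose_mul_inv_factorial (i j : ℕ) :
    ((i + j).choose i : ℝ≥0∞) * ((i + j)! : ℝ≥0∞)⁻¹ = ((i ! : ℝ≥0∞))⁻¹ * ((j ! : ℝ≥0∞))⁻¹ := by
  have hC : ((i + j).choose j : ℝ≥0∞) ≠ 0 := by
    exact_mod_cast (Nat.choose_pos (Nat.le_add_left j i)).ne'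
  rw [Nat.choose_symm_add, ← Nat.add_choose_mul_factorial_mul_factorial i j, Nat.cast_mul,
    Nat.cast_mul, mul_assoc, ENNReal.mul_inv (.inl hC) (by simp), ← mul_assoc,
    ENNReal.mul_inv_cancel hC (by simp), one_mul, ENNReal.mul_inv (by simp) (by simp)]

namespace MeasureTheory.Measure

lemma sum_eq_sum_antidiagonal {α : Type*} [MeasurableSpace α] (m : ℕ × ℕ → Measure α) :
    sum m = sum fun n => ∑ p ∈ antidiagonal n, m p := by
  rw [← sum_comp_equiv HasAntidiagonal.sigmaAntidiagonalEquivProd]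
  ext s hs
  simp only [sum_apply _ hs, finsetSum_apply, ENNReal.tsum_sigma', tsum_fintype,
    Function.comp_apply, HasAntidiagonal.sigmaAntidiagonalEquivProd_apply]
  exact tsum_congr fun n => Finset.sum_coe_sort _ fun p => m p s

lemma sum_conv_sum {M : Type*} [AddMonoid M] [MeasurableSpace M] [MeasurableAdd₂ M]
    {ι κ : Type*} [Countable κ] (μ : ι → Measure M) (ν : κ → Measure M) [∀ k, SFinite (ν k)] :
    sum μ ∗ sum ν = sum fun p : ι × κ => μ p.1 ∗ ν p.2 := by
  rw [Measure.conv, prod_sum, map_sum measurable_add.aemeasurable]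
  rfl

lemma pi_const_add {α ι : Type*} [MeasurableSpace α] [Fintype ι] [DecidableEq ι]
    (μ ν : Measure α) [SigmaFinite μ] [SigmaFinite ν] :
    Measure.pi (fun _ : ι => μ + ν)
      = ∑ S : Finset ι, Measure.pi fun i => if i ∈ S then μ else ν := by
  have (S : Finset ι) (i : ι) : SigmaFinite (if i ∈ S then μ else ν) := by
    split <;> infer_instance
  refine pi_eq fun s _ => ?_
  simp only [finsetSum_apply, pi_pi, add_apply, Fintype.prod_add]
  refine Finset.sum_congr rfl fun S _ => ?_
  rw [← Finset.prod_mul_prod_compl S]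
  congr 1 <;> refine Finset.prod_congr rfl fun i hi => ?_
  · rw [if_pos hi]
  · rw [if_neg (Finset.mem_compl.mp hi)]

end MeasureTheory.Measure

section Configurations

variable {X : Type*} [MeasurableSpace X]

lemma measurable_sum_dirac {ι : Type*} [Fintype ι] :
    Measurable fun x : ι → X => ∑ i, Measure.dirac (x i) :=
  Finset.measurable_sum _ fun i _ => Measure.measurable_dirac.comp (measurable_pi_apply i)

lemma map_sum_dirac_pi_comp_equiv {ι κ : Type*} [Fintype ι] [Fintype κ] (e : ι ≃ κ)
    (μ : κ → Measure X) [∀ k, SigmaFinite (μ k)] :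
    (Measure.pi μ).map (fun x => ∑ k, Measure.dirac (x k))
      = (Measure.pi fun i => μ (e i)).map (fun x => ∑ i, Measure.dirac (x i)) := by
  rw [← (measurePreserving_piCongrLeft μ e).map_eq,
    Measure.map_map measurable_sum_dirac (MeasurableEquiv.measurable _)]
  congr 1
  funext x
  rw [Function.comp_apply, ← e.sum_comp]
  simp [MeasurableEquiv.piCongrLeft]

lemma map_sum_dirac_pi_sum {ι κ : Type*} [Fintype ι] [Fintype κ]
    (ρ : ι ⊕ κ → Measure X) [∀ s, SigmaFinite (ρ s)] :
    (Measure.pi ρ).map (fun x => ∑ s, Measure.dirac (x s))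
      = (Measure.pi fun i => ρ (.inl i)).map (fun x => ∑ i, Measure.dirac (x i))
          ∗ (Measure.pi fun k => ρ (.inr k)).map (fun x => ∑ k, Measure.dirac (x k)) := by
  rw [Measure.conv, Measure.map_prod_map _ _ measurable_sum_dirac measurable_sum_dirac,
    Measure.map_map measurable_add (measurable_sum_dirac.prodMap measurable_sum_dirac),
    ← (measurePreserving_sumPiEquivProdPi_symm ρ).map_eq,
    Measure.map_map measurable_sum_dirac (MeasurableEquiv.measurable _)]
  congr 1
  funext x
  rw [Function.comp_apply, Fintype.sum_sum_type]
  rfl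

noncomputable def configMeasure (μ : Measure X) (n : ℕ) : Measure (Measure X) :=
  (Measure.pi fun _ : Fin n => μ).map fun x => ∑ i, Measure.dirac (x i)

instance {μ : Measure X} [SigmaFinite μ] (n : ℕ) : SFinite (configMeasure μ n) := by
  unfold configMeasure; infer_instance

lemma map_sum_dirac_pi_const {ι : Type*} [Fintype ι] (μ : Measure X) [SigmaFinite μ] :
    (Measure.pi fun _ : ι => μ).map (fun x => ∑ i, Measure.dirac (x i))
      = configMeasure μ (Fintype.card ι) :=
  (map_sum_dirac_pi_comp_equiv (Fintype.equivFin ι) fun _ => μ).symm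

lemma map_sum_dirac_pi_ite {ι : Type*} [Fintype ι] [DecidableEq ι] (μ ν : Measure X)
    [SigmaFinite μ] [SigmaFinite ν] (S : Finset ι) :
    (Measure.pi fun i => if i ∈ S then μ else ν).map (fun x => ∑ i, Measure.dirac (x i))
      = configMeasure μ #S ∗ configMeasure ν #Sᶜ := by
  have : ∀ i, SigmaFinite (if i ∈ S then μ else ν) := fun i => by split <;> infer_instance
  rw [map_sum_dirac_pi_comp_equiv (Equiv.sumCompl (· ∈ S)), map_sum_dirac_pi_sum]
  have hin (i : {i // i ∈ S}) : (if (Equiv.sumCompl (· ∈ S) (.inl i)) ∈ S then μ else ν) = μ :=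
    if_pos i.2
  have hout (k : {i // i ∉ S}) : (if (Equiv.sumCompl (· ∈ S) (.inr k)) ∈ S then μ else ν) = ν :=
    if_neg k.2
  simp only [hin, hout, map_sum_dirac_pi_const, Fintype.card_coe, Fintype.card_subtype_compl,
    Finset.card_compl]

lemma configMeasure_add (μ ν : Measure X) [SigmaFinite μ] [SigmaFinite ν] (n : ℕ) :
    configMeasure (μ + ν) n
      = ∑ p ∈ antidiagonal n,
          (n.choose p.1 : ℝ≥0∞) • (configMeasure μ p.1 ∗ configMeasure ν p.2) := by
  rw [configMeasure, Measure.pi_const_add,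
    Measure.map_finset_sum measurable_sum_dirac.aemeasurable]
  simp only [map_sum_dirac_pi_ite, Finset.card_compl, Fintype.card_fin]
  rw [← Finset.powerset_univ, Finset.sum_powerset_apply_card
      (fun m => configMeasure μ m ∗ configMeasure ν (n - m)),
    Finset.Nat.sum_antidiagonal_eq_sum_range_succ_mk]
  simp only [Finset.card_univ, Fintype.card_fin, Nat.cast_smul_eq_nsmul]

noncomputable def lebesguePoissonOf (μ : Measure X) : Measure (Measure X) :=
  Measure.sum fun n => ((n ! : ℝ≥0∞))⁻¹ • configMeasure μ n

lemma lebesguePoisson_eq_lebesguePoissonOf (σ : Measure X) (Y : Set X) :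
    lebesguePoisson σ Y = lebesguePoissonOf (σ.restrict Y) :=
  rfl

theorem lebesguePoissonOf_add (μ ν : Measure X) [SigmaFinite μ] [SigmaFinite ν] :
    lebesguePoissonOf (μ + ν) = lebesguePoissonOf μ ∗ lebesguePoissonOf ν := by
  rw [lebesguePoissonOf, lebesguePoissonOf, lebesguePoissonOf, Measure.sum_conv_sum]
  simp only [Measure.conv_smul_left, Measure.conv_smul_right, smul_smul]
  rw [Measure.sum_eq_sum_antidiagonal]
  refine Measure.sum_congr fun n => ?_
  rw [configMeasure_add, Finset.smul_sum]
  refine Finset.sum_congr rfl fun ⟨i, j⟩ hij => ?_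
  obtain rfl : i + j = n := HasAntidiagonal.mem_antidiagonal.mp hij
  rw [smul_smul, mul_comm, ENNReal.add_choose_mul_inv_factorial, mul_comm]

end Configurations

theorem lebesguePoisson_factorizes_general {X : Type*} [MeasurableSpace X] (σ : Measure X)
    (A B : Set X) (hB : MeasurableSet B) (hdisj : Disjoint A B)
    (hAfin : σ A ≠ ⊤) (hBfin : σ B ≠ ⊤) :
    Measure.map (fun p : Measure X × Measure X => p.1 + p.2)
        ((lebesguePoisson σ A).prod (lebesguePoisson σ B))
      = lebesguePoisson σ (A ∪ B) := by
  have : IsFiniteMeasure (σ.restrict A) := isFiniteMeasure_restrict.2 hAfin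
  have : IsFiniteMeasure (σ.restrict B) := isFiniteMeasure_restrict.2 hBfin
  change lebesguePoisson σ A ∗ lebesguePoisson σ B = lebesguePoisson σ (A ∪ B)
  simp only [lebesguePoisson_eq_lebesguePoissonOf, Measure.restrict_union hdisj hB,
    lebesguePoissonOf_add]

theorem lebesguePoisson_factorizes {X : Type*} [MeasurableSpace X] (σ : Measure X)
    (A B : Set X) (hA : MeasurableSet A) (hB : MeasurableSet B) (hdisj : Disjoint A B)
    (hAfin : σ A ≠ ⊤) (hBfin : σ B ≠ ⊤) :
    Measure.map (fun p : Measure X × Measure X => p.1 + p.2)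
        ((lebesguePoisson σ A).prod (lebesguePoisson σ B))
      = lebesguePoisson σ (A ∪ B) :=
  lebesguePoisson_factorizes_general σ A B hB hdisj hAfin hBfin
end
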